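/- arXiv:1706.10030 — 4 statements merged into one kernel-verified Lean document; each statement's English description precedes it below -/
import Mathlib

section
/- Suppose M is nonempty. Define ψ : ℝⁿ → ℝⁿ by ψ(x) = φ^L(x) − L·d for x ∉ M and ψ(x) = x for x ∈ M. Fix z₀ ∈ ℝⁿ \ M, set y₀ = z₀, y_k = ψ(y_{k−1}), and z_k = φ_{k−1}^L(z_{k−1}) for k ≥ 1. Then for every k ∈ ℕ such that y_j ∉ M for all 0 ≤ j < k, one has dist(z_k, M_k) = dist(y_k, M), where M_k = {x ∈ ℝⁿ : ⟨a_i, x − kL·d⟩ ≤ b_i for all i} and dist denotes the infimum distance from a point to a set. -/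
/-!
Each shifted Fejér map is the conjugate of `φ` by a translation: `φ_k x = φ (x - kL·d) + kL·d`,
and `M_k = M + kL·d`. Hence, as long as the `y`-orbit has not entered `M`, the two orbits differ
by a translation, `z_k = y_k + kL·d`, and translations are isometries, so they preserve the
distance from a point to a set.
-/

open Function Metric

section Translation

variable {E : Type*} [AddCommGroup E]

theorem semiconj_add_right_of_eq_sub {F f g : E → E} (v : E)
    (hf : ∀ x, f x = x - F x) (hg : ∀ x, g x = x - F (x - v)) :
    Semiconj (· + v) f g := fun x => by
  simp only [hf, hg, add_sub_cancel_right]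
  abel

theorem eq_add_nsmul_of_semiconj {f : E → E} {g : ℕ → E → E} {w : E}
    (hg : ∀ k, Semiconj (· + k • w) f (g k)) {y z : ℕ → E}
    (h0 : z 0 = y 0) (hz : ∀ k, z (k + 1) = g k (z k)) :
    ∀ k, (∀ j < k, y (j + 1) = f (y j) - w) → z k = y k + k • w
  | 0, _ => by rw [h0, zero_smul, add_zero]
  | k + 1, hy => by
    rw [hz, eq_add_nsmul_of_semiconj hg h0 hz k fun j hj => hy j (by omega), ← hg k,
      hy k k.lt_succ_self, succ_nsmul]
    dsimp only
    abel

theorem setOf_sub_eq_image_add_right (P : E → Prop) (v : E) :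
    {x | P (x - v)} = (· + v) '' {x | P x} := by
  simp only [Set.image_add_right, Set.preimage_ofPred_eq, sub_eq_add_neg]

end Translation

theorem infDist_add_right_setOf_sub {E : Type*} [SeminormedAddCommGroup E]
    (P : E → Prop) (x v : E) :
    infDist (x + v) {y | P (y - v)} = infDist x {y | P y} := by
  rw [setOf_sub_eq_image_add_right]
  exact infDist_image (isometry_add_right v)

theorem dist_z_Mk_eq_dist_y_M_general
    (n m : ℕ)
    (a : Fin m → EuclideanSpace ℝ (Fin n))
    (b : Fin m → ℝ) (lam : ℝ)
    (d : EuclideanSpace ℝ (Fin n)) (L : ℕ)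
    (φ : EuclideanSpace ℝ (Fin n) → EuclideanSpace ℝ (Fin n))
    (hφ : ∀ x, φ x =
      x - (lam / m) • ∑ i, ((max ((inner ℝ (a i) x : ℝ) - b i) 0) / ‖a i‖ ^ 2) • a i)
    (φfam : ℕ → EuclideanSpace ℝ (Fin n) → EuclideanSpace ℝ (Fin n))
    (hφfam : ∀ k x, φfam k x =
      x - (lam / m) • ∑ i,
        ((max ((inner ℝ (a i) (x - ((k * L : ℕ) : ℝ) • d) : ℝ) - b i) 0) / ‖a i‖ ^ 2) • a i)
    (M : Set (EuclideanSpace ℝ (Fin n)))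
    (hM : M = {x | ∀ i, (inner ℝ (a i) x : ℝ) ≤ b i})
    (Mk : ℕ → Set (EuclideanSpace ℝ (Fin n)))
    (hMk : ∀ k, Mk k = {x | ∀ i, (inner ℝ (a i) (x - ((k * L : ℕ) : ℝ) • d) : ℝ) ≤ b i})
    (ψ : EuclideanSpace ℝ (Fin n) → EuclideanSpace ℝ (Fin n))
    (hψ_out : ∀ x ∉ M, ψ x = φ^[L] x - (L : ℝ) • d)
    (z₀ : EuclideanSpace ℝ (Fin n))
    (y : ℕ → EuclideanSpace ℝ (Fin n))
    (hy0 : y 0 = z₀) (hy : ∀ k, y (k + 1) = ψ (y k))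
    (z : ℕ → EuclideanSpace ℝ (Fin n))
    (hz0 : z 0 = z₀) (hz : ∀ k, z (k + 1) = (φfam k)^[L] (z k)) :
    ∀ k : ℕ, (∀ j < k, y j ∉ M) →
      Metric.infDist (z k) (Mk k) = Metric.infDist (y k) M := by
  intro k hk
  have hshift : ∀ j : ℕ, ((j * L : ℕ) : ℝ) • d = j • ((L : ℝ) • d) := fun j => by
    rw [Nat.cast_mul, mul_smul, Nat.cast_smul_eq_nsmul]
  have hconj : ∀ j, Semiconj (· + j • ((L : ℝ) • d)) φ^[L] (φfam j)^[L] := fun j => by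
    rw [← hshift]
    exact (semiconj_add_right_of_eq_sub _ hφ (hφfam j)).iterate_right L
  have horbit : z k = y k + ((k * L : ℕ) : ℝ) • d := by
    rw [hshift]
    exact eq_add_nsmul_of_semiconj hconj (hz0.trans hy0.symm) hz k
      fun j hj => (hy j).trans (hψ_out _ (hk j hj))
  rw [horbit, hMk, hM, infDist_add_right_setOf_sub (fun x => ∀ i, inner ℝ (a i) x ≤ b i)]

/-- Equation (24) in the proof of Theorem 1: `dist(z_k, M_k) = dist(y_k, M)`. -/
theorem dist_z_Mk_eq_dist_y_M
    (n m : ℕ) (hn : 1 ≤ n) (hm : 1 ≤ m)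
    (a : Fin m → EuclideanSpace ℝ (Fin n)) (ha : ∀ i, a i ≠ 0)
    (b : Fin m → ℝ) (lam : ℝ)
    (d : EuclideanSpace ℝ (Fin n)) (L : ℕ) (hL : 1 ≤ L)
    (φ : EuclideanSpace ℝ (Fin n) → EuclideanSpace ℝ (Fin n))
    (hφ : ∀ x, φ x =
      x - (lam / m) • ∑ i, ((max ((inner ℝ (a i) x : ℝ) - b i) 0) / ‖a i‖ ^ 2) • a i)
    (φfam : ℕ → EuclideanSpace ℝ (Fin n) → EuclideanSpace ℝ (Fin n))
    (hφfam : ∀ k x, φfam k x =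
      x - (lam / m) • ∑ i,
        ((max ((inner ℝ (a i) (x - ((k * L : ℕ) : ℝ) • d) : ℝ) - b i) 0) / ‖a i‖ ^ 2) • a i)
    (M : Set (EuclideanSpace ℝ (Fin n)))
    (hM : M = {x | ∀ i, (inner ℝ (a i) x : ℝ) ≤ b i})
    (Mk : ℕ → Set (EuclideanSpace ℝ (Fin n)))
    (hMk : ∀ k, Mk k = {x | ∀ i, (inner ℝ (a i) (x - ((k * L : ℕ) : ℝ) • d) : ℝ) ≤ b i})
    (hMne : M.Nonempty)
    (ψ : EuclideanSpace ℝ (Fin n) → EuclideanSpace ℝ (Fin n))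
    (hψ_out : ∀ x ∉ M, ψ x = φ^[L] x - (L : ℝ) • d)
    (hψ_in : ∀ x ∈ M, ψ x = x)
    (z₀ : EuclideanSpace ℝ (Fin n)) (hz₀ : z₀ ∉ M)
    (y : ℕ → EuclideanSpace ℝ (Fin n))
    (hy0 : y 0 = z₀) (hy : ∀ k, y (k + 1) = ψ (y k))
    (z : ℕ → EuclideanSpace ℝ (Fin n))
    (hz0 : z 0 = z₀) (hz : ∀ k, z (k + 1) = (φfam k)^[L] (z k)) :
    ∀ k : ℕ, (∀ j < k, y j ∉ M) →
      Metric.infDist (z k) (Mk k) = Metric.infDist (y k) M :=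
  dist_z_Mk_eq_dist_y_M_general n m a b lam d L φ hφ φfam hφfam M hM Mk hMk ψ hψ_out z₀ y hy0 hy z
    hz0 hz
end

section
/- Suppose 0 < λ < 2 and M is nonempty. Then φ is an M-Fejér map: (i) φ(y) = y for every y ∈ M, and (ii) ‖φ(x) − y‖ < ‖x − y‖ for every x ∈ ℝⁿ \ M and every y ∈ M. -/
/-!
Each summand of `φ x` is the residual `rᵢ = x - Pᵢ x` of the orthogonal projection `Pᵢ` onto the
`i`-th half-space, and `‖rᵢ‖² ≤ ⟪rᵢ, x - y⟫` for every `y` in that half-space. Expanding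
`‖(x - y) - (λ / m) ∑ rᵢ‖²` and bounding `‖∑ rᵢ‖² ≤ m ∑ ‖rᵢ‖²` gives
`‖φ x - y‖² ≤ ‖x - y‖² - λ (2 - λ) / m ∑ ‖rᵢ‖²`, and some `rᵢ` is nonzero when `x ∉ M`.
-/

open Finset
open scoped RealInnerProductSpace

theorem norm_sum_sq_le_card_mul_sum_norm_sq {E ι : Type*} [SeminormedAddCommGroup E]
    (s : Finset ι) (d : ι → E) :
    ‖∑ i ∈ s, d i‖ ^ 2 ≤ #s * ∑ i ∈ s, ‖d i‖ ^ 2 :=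
  (pow_le_pow_left₀ (norm_nonneg _) (norm_sum_le s d) 2).trans
    (sq_sum_le_card_mul_sum_sq (s := s) (f := fun i => ‖d i‖))

section

variable {E : Type*} [NormedAddCommGroup E] [InnerProductSpace ℝ E]

/-- `x` minus its orthogonal projection onto the half-space `{z | ⟪a, z⟫ ≤ b}`. -/
noncomputable def halfspaceResidual (a : E) (b : ℝ) (x : E) : E :=
  (max (⟪a, x⟫ - b) 0 / ‖a‖ ^ 2) • a

theorem halfspaceResidual_eq_zero {a : E} {b : ℝ} {x : E} (hx : ⟪a, x⟫ ≤ b) :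
    halfspaceResidual a b x = 0 := by
  simp [halfspaceResidual, max_eq_right (sub_nonpos.mpr hx)]

theorem halfspaceResidual_ne_zero {a : E} {b : ℝ} {x y : E} (hy : ⟪a, y⟫ ≤ b)
    (hx : b < ⟪a, x⟫) : halfspaceResidual a b x ≠ 0 := by
  have ha : a ≠ 0 := by
    rintro rfl
    simp only [inner_zero_left] at hx hy
    linarith
  have hcoeff : 0 < max (⟪a, x⟫ - b) 0 / ‖a‖ ^ 2 :=
    div_pos (lt_max_of_lt_left (sub_pos.mpr hx)) (by positivity)
  exact smul_ne_zero hcoeff.ne' ha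

theorem norm_sq_halfspaceResidual_le_inner {a : E} {b : ℝ} (x : E) {y : E}
    (hy : ⟪a, y⟫ ≤ b) :
    ‖halfspaceResidual a b x‖ ^ 2 ≤ ⟪halfspaceResidual a b x, x - y⟫ := by
  rcases le_total ⟪a, x⟫ b with hx | hx
  · simp [halfspaceResidual_eq_zero hx]
  rcases eq_or_ne a 0 with rfl | ha
  · simp [halfspaceResidual]
  set c := (⟪a, x⟫ - b) / ‖a‖ ^ 2
  have hc : 0 ≤ c := div_nonneg (sub_nonneg.mpr hx) (by positivity)
  have hcx : c * ‖a‖ ^ 2 = ⟪a, x⟫ - b := div_mul_cancel₀ _ (by positivity)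
  have hres : halfspaceResidual a b x = c • a := by
    rw [halfspaceResidual, max_eq_left (sub_nonneg.mpr hx)]
  rw [hres, norm_smul, mul_pow, Real.norm_eq_abs, sq_abs, real_inner_smul_left,
    inner_sub_right]
  calc c ^ 2 * ‖a‖ ^ 2 = c * (⟪a, x⟫ - b) := by rw [← hcx]; ring
    _ ≤ c * (⟪a, x⟫ - ⟪a, y⟫) := by gcongr

theorem norm_sub_smul_sum_sq_le {ι : Type*} (s : Finset ι) (d : ι → E) (v : E) {lam : ℝ}
    (hlam : 0 ≤ lam) (hd : ∀ i ∈ s, ‖d i‖ ^ 2 ≤ ⟪d i, v⟫) :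
    ‖v - (lam / #s) • ∑ i ∈ s, d i‖ ^ 2 ≤
      ‖v‖ ^ 2 - lam * (2 - lam) / #s * ∑ i ∈ s, ‖d i‖ ^ 2 := by
  set S := ∑ i ∈ s, ‖d i‖ ^ 2
  have hinner : S ≤ ⟪∑ i ∈ s, d i, v⟫ := by
    rw [sum_inner]
    exact sum_le_sum hd
  have hnorm := norm_sum_sq_le_card_mul_sum_norm_sq s d
  have hc : 0 ≤ lam / #s := by positivity
  rw [norm_sub_sq_real, real_inner_smul_right, norm_smul, mul_pow, Real.norm_eq_abs, sq_abs,
    real_inner_comm]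
  calc ‖v‖ ^ 2 - 2 * (lam / #s * ⟪∑ i ∈ s, d i, v⟫) + (lam / #s) ^ 2 * ‖∑ i ∈ s, d i‖ ^ 2
      ≤ ‖v‖ ^ 2 - 2 * (lam / #s * S) + (lam / #s) ^ 2 * (#s * S) := by gcongr
    _ = ‖v‖ ^ 2 - lam * (2 - lam) / #s * S := by
      rcases eq_or_ne (#s : ℝ) 0 with h | h
      · simp [h]
      · field_simp
        ring

theorem norm_sub_smul_sum_lt {ι : Type*} (s : Finset ι) (d : ι → E) (v : E) {lam : ℝ}
    (hlam₀ : 0 < lam) (hlam₂ : lam < 2) (hd : ∀ i ∈ s, ‖d i‖ ^ 2 ≤ ⟪d i, v⟫)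
    {j : ι} (hj : j ∈ s) (hdj : d j ≠ 0) :
    ‖v - (lam / #s) • ∑ i ∈ s, d i‖ < ‖v‖ := by
  have hS : 0 < ∑ i ∈ s, ‖d i‖ ^ 2 :=
    sum_pos' (fun i _ => by positivity) ⟨j, hj, by positivity⟩
  have hcard : (0 : ℝ) < #s := by exact_mod_cast card_pos.mpr ⟨j, hj⟩
  have hgain : 0 < lam * (2 - lam) / #s * ∑ i ∈ s, ‖d i‖ ^ 2 := by
    have : 0 < 2 - lam := by linarith
    positivity
  refine lt_of_pow_lt_pow_left₀ 2 (norm_nonneg v) ?_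
  linarith [norm_sub_smul_sum_sq_le s d v hlam₀.le hd]

end

theorem phi_is_M_fejer_general
    (n m : ℕ)
    (a : Fin m → EuclideanSpace ℝ (Fin n))
    (b : Fin m → ℝ) (lam : ℝ) (hlam₀ : 0 < lam) (hlam₂ : lam < 2)
    (φ : EuclideanSpace ℝ (Fin n) → EuclideanSpace ℝ (Fin n))
    (hφ : ∀ x, φ x =
      x - (lam / m) • ∑ i, ((max ((inner ℝ (a i) x : ℝ) - b i) 0) / ‖a i‖ ^ 2) • a i)
    (M : Set (EuclideanSpace ℝ (Fin n)))
    (hM : M = {x | ∀ i, (inner ℝ (a i) x : ℝ) ≤ b i}) :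
    (∀ y ∈ M, φ y = y) ∧
    (∀ x ∉ M, ∀ y ∈ M, ‖φ x - y‖ < ‖x - y‖) := by
  have hφ' : ∀ x, φ x = x - (lam / #(univ : Finset (Fin m))) •
      ∑ i, halfspaceResidual (a i) (b i) x := by
    simpa [halfspaceResidual] using hφ
  subst hM
  refine ⟨fun y hy => ?_, fun x hx y hy => ?_⟩
  · simp [hφ', halfspaceResidual_eq_zero (hy _)]
  · obtain ⟨j, hj⟩ : ∃ j, b j < inner ℝ (a j) x := by simpa using hx
    rw [hφ', sub_right_comm]
    exact norm_sub_smul_sum_lt univ _ (x - y) hlam₀ hlam₂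
      (fun i _ => norm_sq_halfspaceResidual_le_inner x (hy i)) (mem_univ j)
      (halfspaceResidual_ne_zero (hy j) hj)

/-- For `0 < λ < 2`, the map `φ` is `M`-Fejér: it fixes every point of `M` and
strictly decreases the distance to every point of `M` outside of `M`. -/
theorem phi_is_M_fejer
    (n m : ℕ) (hn : 1 ≤ n) (hm : 1 ≤ m)
    (a : Fin m → EuclideanSpace ℝ (Fin n)) (ha : ∀ i, a i ≠ 0)
    (b : Fin m → ℝ) (lam : ℝ) (hlam₀ : 0 < lam) (hlam₂ : lam < 2)
    (φ : EuclideanSpace ℝ (Fin n) → EuclideanSpace ℝ (Fin n))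
    (hφ : ∀ x, φ x =
      x - (lam / m) • ∑ i, ((max ((inner ℝ (a i) x : ℝ) - b i) 0) / ‖a i‖ ^ 2) • a i)
    (M : Set (EuclideanSpace ℝ (Fin n)))
    (hM : M = {x | ∀ i, (inner ℝ (a i) x : ℝ) ≤ b i})
    (hMne : M.Nonempty) :
    (∀ y ∈ M, φ y = y) ∧
    (∀ x ∉ M, ∀ y ∈ M, ‖φ x - y‖ < ‖x - y‖) :=
  phi_is_M_fejer_general n m a b lam hlam₀ hlam₂ φ hφ M hM
end

section
/- Let M ⊆ ℝⁿ be a nonempty, convex, compact set and let φ : ℝⁿ → ℝⁿ be a continuous single-valued map that is M-Fejér, i.e., φ(y) = y for every y ∈ M and ‖φ(x) − y‖ < ‖x − y‖ for every x ∉ M and every y ∈ M. Then for every initial point x₀ ∈ ℝⁿ, the Fejér process {φ^s(x₀)}_{s=0}^∞ converges to some point x̄ ∈ M. -/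
/-- Lemma 39.1 cited in the paper: for a nonempty convex compact `M ⊆ ℝⁿ` and a
continuous `M`-Fejér map `φ`, the Fejér process `{φ^s(x₀)}` converges to a
point of `M`. -/
theorem fejer_process_converges
    (n : ℕ) (hn : 1 ≤ n)
    (M : Set (EuclideanSpace ℝ (Fin n)))
    (hMne : M.Nonempty) (hMconv : Convex ℝ M) (hMcomp : IsCompact M)
    (φ : EuclideanSpace ℝ (Fin n) → EuclideanSpace ℝ (Fin n))
    (hcont : Continuous φ)
    (hfix : ∀ y ∈ M, φ y = y)
    (hfej : ∀ x ∉ M, ∀ y ∈ M, ‖φ x - y‖ < ‖x - y‖) :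
    ∀ x₀ : EuclideanSpace ℝ (Fin n),
      ∃ xbar ∈ M, Filter.Tendsto (fun s => φ^[s] x₀) Filter.atTop (nhds xbar) := by
  intro x₀
  set x : ℕ → EuclideanSpace ℝ (Fin n) := fun s => φ^[s] x₀ with hxdef
  have hsucc : ∀ s, x (s + 1) = φ (x s) := fun s => Function.iterate_succ_apply' φ s x₀
  by_cases hall : ∀ s, x s ∉ M
  · -- all iterates stay outside M
    obtain ⟨y₀, hy₀⟩ := hMne
    have step : ∀ y ∈ M, ∀ s, ‖x (s + 1) - y‖ ≤ ‖x s - y‖ := by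
      intro y hy s
      rw [hsucc s]
      exact le_of_lt (hfej _ (hall s) y hy)
    have anti : ∀ y ∈ M, Antitone fun s => ‖x s - y‖ := fun y hy =>
      antitone_nat_of_succ_le (step y hy)
    have hbdd_below : ∀ y : EuclideanSpace ℝ (Fin n),
        BddBelow (Set.range fun s => ‖x s - y‖) := by
      intro y
      refine ⟨0, ?_⟩
      rintro _ ⟨s, rfl⟩
      positivity
    have hdist : ∀ y ∈ M, Filter.Tendsto (fun s => ‖x s - y‖) Filter.atTop
        (nhds (⨅ s, ‖x s - y‖)) := fun y hy =>
      tendsto_atTop_ciInf (anti y hy) (hbdd_below y)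
    -- the sequence is bounded, so it has a convergent subsequence
    have bdd : ∀ s, x s ∈ Metric.closedBall y₀ ‖x 0 - y₀‖ := by
      intro s
      rw [Metric.mem_closedBall, dist_eq_norm]
      exact anti y₀ hy₀ (Nat.zero_le s)
    obtain ⟨xbar, _, g, hg, hconv⟩ :=
      (isCompact_closedBall y₀ ‖x 0 - y₀‖).tendsto_subseq bdd
    -- xbar ∈ M
    have h1 : Filter.Tendsto (fun k => ‖x (g k) - y₀‖) Filter.atTop
        (nhds (⨅ s, ‖x s - y₀‖)) := (hdist y₀ hy₀).comp hg.tendsto_atTop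
    have h1' : Filter.Tendsto (fun k => ‖x (g k) - y₀‖) Filter.atTop
        (nhds ‖xbar - y₀‖) := (hconv.sub tendsto_const_nhds).norm
    have hL : ‖xbar - y₀‖ = ⨅ s, ‖x s - y₀‖ := tendsto_nhds_unique h1' h1
    have hgsucc : Filter.Tendsto (fun k => g k + 1) Filter.atTop Filter.atTop :=
      Filter.tendsto_atTop_mono (fun k => Nat.le_succ (g k)) hg.tendsto_atTop
    have h2 : Filter.Tendsto (fun k => ‖x (g k + 1) - y₀‖) Filter.atTop
        (nhds (⨅ s, ‖x s - y₀‖)) := (hdist y₀ hy₀).comp hgsucc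
    have h2' : Filter.Tendsto (fun k => ‖x (g k + 1) - y₀‖) Filter.atTop
        (nhds ‖φ xbar - y₀‖) := by
      have hφconv : Filter.Tendsto (fun k => φ (x (g k))) Filter.atTop (nhds (φ xbar)) :=
        (hcont.tendsto xbar).comp hconv
      have : (fun k => ‖x (g k + 1) - y₀‖) = fun k => ‖φ (x (g k)) - y₀‖ := by
        funext k; rw [hsucc]
      rw [this]
      exact (hφconv.sub tendsto_const_nhds).norm
    have heq : ‖φ xbar - y₀‖ = ‖xbar - y₀‖ := by
      rw [hL]; exact tendsto_nhds_unique h2' h2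
    have hxbarM : xbar ∈ M := by
      by_contra hnot
      exact absurd heq (ne_of_lt (hfej xbar hnot y₀ hy₀))
    refine ⟨xbar, hxbarM, ?_⟩
    -- distances to xbar are antitone and a subsequence tends to 0
    have hb : Filter.Tendsto (fun s => ‖x s - xbar‖) Filter.atTop
        (nhds (⨅ s, ‖x s - xbar‖)) := hdist xbar hxbarM
    have hb1 : Filter.Tendsto (fun k => ‖x (g k) - xbar‖) Filter.atTop
        (nhds (⨅ s, ‖x s - xbar‖)) := hb.comp hg.tendsto_atTop
    have hb2 : Filter.Tendsto (fun k => ‖x (g k) - xbar‖) Filter.atTop (nhds 0) := by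
      have := (hconv.sub (tendsto_const_nhds (x := xbar))).norm
      simpa using this
    have hinf0 : (⨅ s, ‖x s - xbar‖) = 0 := tendsto_nhds_unique hb1 hb2
    rw [hinf0] at hb
    exact tendsto_iff_norm_sub_tendsto_zero.mpr hb
  · -- some iterate lands in M; the process is eventually constant there
    push_neg at hall
    obtain ⟨s₀, hs₀⟩ := hall
    have hconst : ∀ k, x (s₀ + k) = x s₀ := by
      intro k
      induction k with
      | zero => rfl
      | succ k ih => rw [← Nat.add_assoc, hsucc, ih, hfix _ hs₀]
    refine ⟨x s₀, hs₀, tendsto_atTop_of_eventually_const (i₀ := s₀) ?_⟩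
    intro i hi
    have := hconst (i - s₀)
    rwa [Nat.add_sub_cancel' hi] at this
end

section
/- Let K be a positive even integer, let χ be a nonnegative integer, and let η be a nonzero integer with |η| ≤ K/2. Define the sequential number α = η + sgn(η)·χ·(K/2) + K (an integer, where sgn(η) ∈ {−1, 1}). Then the forward conversion formulas recover the marker: ||α − K| − 1| ÷ (K/2) = χ and sgn(α − K)·((( |α − K| − 1) mod (K/2)) + 1) = η, where ÷ denotes integer division (floor division of nonnegative integers) and mod denotes the remainder. -/
/-- The conversion formulas between the sequential number `α` and the marker
`(χ, η)` of a point of the cross are mutually inverse: starting from a marker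
`(χ, η)` with `χ ≥ 0`, `η ≠ 0`, `|η| ≤ K/2`, the forward formulas recover the
marker from `α = η + sgn(η)·χ·(K/2) + K`. -/
theorem marker_number_conversion
    (K χ η : ℤ) (hK : 0 < K) (hKeven : Even K)
    (hχ : 0 ≤ χ) (hη : η ≠ 0) (hηK : |η| ≤ K / 2)
    (α : ℤ) (hα : α = η + Int.sign η * χ * (K / 2) + K) :
    (|α - K| - 1) / (K / 2) = χ ∧
    Int.sign (α - K) * ((|α - K| - 1) % (K / 2) + 1) = η := by
  obtain ⟨m, hm⟩ := hKeven
  have hM : K / 2 = m := by omega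
  have hm0 : 0 < m := by omega
  rw [hM] at hηK ⊢
  rcases lt_or_gt_of_ne hη with hneg | hpos
  · have hs : Int.sign η = -1 := Int.sign_eq_neg_one_of_neg hneg
    have hαK : α - K = η - χ * m := by rw [hα, hs, hM]; ring
    have h1 : |α - K| = -η + χ * m := by
      rw [hαK, abs_of_nonpos (by nlinarith)]; ring
    have habs : (-η : ℤ) ≤ m := by rw [abs_of_neg hneg] at hηK; omega
    have hsgn : Int.sign (α - K) = -1 :=
      Int.sign_eq_neg_one_of_neg (by rw [hαK]; nlinarith)
    have h2 : |α - K| - 1 = (-η - 1) + χ * m := by rw [h1]; ring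
    constructor
    · rw [h2, Int.add_mul_ediv_right _ _ (by omega : m ≠ 0),
        Int.ediv_eq_zero_of_lt (by omega) (by omega)]
      omega
    · rw [h2, hsgn, Int.add_mul_emod_self_right,
        Int.emod_eq_of_lt (by omega) (by omega)]
      ring
  · have hs : Int.sign η = 1 := Int.sign_eq_one_of_pos hpos
    have hαK : α - K = η + χ * m := by rw [hα, hs, hM]; ring
    have h1 : |α - K| = η + χ * m := by
      rw [hαK, abs_of_pos (by nlinarith)]
    have habs : η ≤ m := by rw [abs_of_pos hpos] at hηK; omega
    have hsgn : Int.sign (α - K) = 1 :=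
      Int.sign_eq_one_of_pos (by rw [hαK]; nlinarith)
    have h2 : |α - K| - 1 = (η - 1) + χ * m := by rw [h1]; ring
    constructor
    · rw [h2, Int.add_mul_ediv_right _ _ (by omega : m ≠ 0),
        Int.ediv_eq_zero_of_lt (by omega) (by omega)]
      omega
    · rw [h2, hsgn, Int.add_mul_emod_self_right,
        Int.emod_eq_of_lt (by omega) (by omega)]
      ring
end
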